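/- arXiv:2601.20735 — 2 statements merged into one kernel-verified Lean document; each statement's English description precedes it below -/
import Mathlib

section
/- Let P be a plain metric logic program over alphabet 𝒜 and let λ ≥ 1 and ν ∈ ℕ. If ⟨T,T⟩ is an equilibrium model of Π_λ(P) ∪ Δ_{λ,ν} ∪ Ψ_{λ,ν}(P) (over the alphabet 𝒜* ∪ 𝒯), then ⟨T,T⟩ is timed wrt λ and σ(⟨T,T⟩) is a metric equilibrium model of P. -/
namespace MetricASP

/-- Metric intervals `[m..n)` with `n = none` standing for `ω`. -/
structure Interval : Type where
  m : ℕ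
  n : Option ℕ

/-- `x ∈ [m..n)` iff `m ≤ x` and (`n = ω` or `x < n`). -/
def Interval.mem (I : Interval) (x : ℕ) : Prop :=
  I.m ≤ x ∧ ∀ nn ∈ I.n, x < nn

/-- The interval `[0..ω)`. -/
def fullInterval : Interval := ⟨0, none⟩

/-- Metric formulas over an alphabet `α`. -/
inductive MF (α : Type) : Type
  | fls
  | atom (a : α)
  | conj (φ ψ : MF α)
  | disj (φ ψ : MF α)
  | impl (φ ψ : MF α)
  | init
  | next (I : Interval) (φ : MF α)
  | always (I : Interval) (φ : MF α)
  | evt (I : Interval) (φ : MF α)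

def MF.neg {α : Type} (φ : MF α) : MF α := .impl φ .fls
def MF.top {α : Type} : MF α := MF.neg .fls
def MF.fin {α : Type} : MF α := MF.neg (.next fullInterval MF.top)

/-- Timing function wrt `lam`. -/
def IsTiming (lam : ℕ) (τ : ℕ → ℕ) : Prop :=
  τ 0 = 0 ∧ ∀ k, k + 1 < lam → τ k < τ (k + 1)

/-- `H i ⊆ T i` for all relevant indices. -/
def IsTrace {α : Type} (lam : ℕ) (H T : ℕ → Set α) : Prop :=
  ∀ i, i < lam → H i ⊆ T i

/-- Satisfaction of a metric formula by a timed HT-trace of length `lam`. -/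
def MSat {α : Type} (lam : ℕ) (τ : ℕ → ℕ) :
    (ℕ → Set α) → (ℕ → Set α) → ℕ → MF α → Prop
  | _, _, _, .fls => False
  | H, _, k, .atom a => a ∈ H k
  | H, T, k, .conj φ ψ => MSat lam τ H T k φ ∧ MSat lam τ H T k ψ
  | H, T, k, .disj φ ψ => MSat lam τ H T k φ ∨ MSat lam τ H T k ψ
  | H, T, k, .impl φ ψ =>
      (MSat lam τ H T k φ → MSat lam τ H T k ψ) ∧
      (MSat lam τ T T k φ → MSat lam τ T T k ψ)
  | _, _, k, .init => k = 0
  | H, T, k, .next I φ =>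
      k + 1 < lam ∧ MSat lam τ H T (k + 1) φ ∧ I.mem (τ (k + 1) - τ k)
  | H, T, k, .evt I φ =>
      ∃ i, k ≤ i ∧ i < lam ∧ I.mem (τ i - τ k) ∧ MSat lam τ H T i φ
  | H, T, k, .always I φ =>
      ∀ i, k ≤ i → i < lam → I.mem (τ i - τ k) → MSat lam τ H T i φ

/-- MHT-model of a set of metric formulas. -/
def MHTModels {α : Type} (lam : ℕ) (τ : ℕ → ℕ) (H T : ℕ → Set α)
    (Γ : Set (MF α)) : Prop :=
  ∀ φ ∈ Γ, MSat lam τ H T 0 φ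

/-- Metric equilibrium model (of the total trace given by `T` and `τ`). -/
def MetricEqModel {α : Type} (lam : ℕ) (τ : ℕ → ℕ) (T : ℕ → Set α)
    (Γ : Set (MF α)) : Prop :=
  MHTModels lam τ T T Γ ∧
  ∀ H : ℕ → Set α, IsTrace lam H T → (∃ i, i < lam ∧ H i ≠ T i) →
    ¬ MHTModels lam τ H T Γ

/-- Propositional formulas over atoms `β`. -/
inductive PF (β : Type) : Type
  | fls
  | atom (a : β)
  | and (φ ψ : PF β)
  | or (φ ψ : PF β)
  | imp (φ ψ : PF β)

def PF.neg {β : Type} (φ : PF β) : PF β := .imp φ .fls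
def PF.top {β : Type} : PF β := PF.neg .fls

def bigOr {β : Type} (l : List (PF β)) : PF β := l.foldr .or .fls
def bigAnd {β : Type} (l : List (PF β)) : PF β := l.foldr .and PF.top

/-- Here-and-there satisfaction. -/
def HSat {β : Type} : Set β → Set β → PF β → Prop
  | _, _, .fls => False
  | H, _, .atom a => a ∈ H
  | H, T, .and φ ψ => HSat H T φ ∧ HSat H T ψ
  | H, T, .or φ ψ => HSat H T φ ∨ HSat H T ψ
  | H, T, .imp φ ψ => (HSat H T φ → HSat H T ψ) ∧ (HSat T T φ → HSat T T ψ)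

def HTModels {β : Type} (H T : Set β) (Γ : Set (PF β)) : Prop :=
  ∀ φ ∈ Γ, HSat H T φ

/-- `T` (as the total interpretation `⟨T,T⟩`) is an equilibrium model of `Γ`. -/
def EqModel {β : Type} (T : Set β) (Γ : Set (PF β)) : Prop :=
  HTModels T T Γ ∧ ∀ H : Set β, H ⊂ T → ¬ HTModels H T Γ

/-- Literals over atoms `β`. -/
inductive Lit (β : Type) : Type
  | pos (a : β)
  | neg (a : β)

/-- Body atoms: atoms of the alphabet, `𝗜`, or `𝗙`. -/
inductive BAt (α : Type) : Type
  | atm (a : α)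
  | init
  | fin

/-- A plain metric rule: `□(α ← β)` or `□(◯_I a ← β)`. -/
inductive PlainRule (α : Type) : Type
  | basic (head : List (Lit α)) (body : List (Lit (BAt α)))
  | nxt (I : Interval) (a : α) (body : List (Lit (BAt α)))

def litMF {α β : Type} (f : β → MF α) : Lit β → MF α
  | .pos a => f a
  | .neg a => MF.neg (f a)

def BAt.mf {α : Type} : BAt α → MF α
  | .atm a => .atom a
  | .init => .init
  | .fin => MF.fin

def headMF {α : Type} (l : List (Lit α)) : MF α :=
  (l.map (litMF MF.atom)).foldr .disj .fls

def bodyMF {α : Type} (l : List (Lit (BAt α))) : MF α :=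
  (l.map (litMF BAt.mf)).foldr .conj MF.top

/-- The metric formula corresponding to a plain metric rule. -/
def PlainRule.mf {α : Type} : PlainRule α → MF α
  | .basic h b => .always fullInterval (.impl (bodyMF b) (headMF h))
  | .nxt I a b => .always fullInterval (.impl (bodyMF b) (.next I (.atom a)))

/-- Atoms of the translated propositional language: `a_k` and `t_{k,d}`. -/
inductive XA (α : Type) : Type
  | av (a : α) (k : ℕ)
  | tv (k d : ℕ)

def sigLit {β γ : Type} (f : β → PF γ) : Lit β → PF γ
  | .pos a => f a
  | .neg a => PF.neg (f a)

def sigBAt {α : Type} (lam k : ℕ) : BAt α → PF (XA α)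
  | .atm a => .atom (.av a k)
  | .init => if k = 0 then PF.top else .fls
  | .fin => if k = lam - 1 then PF.top else .fls

def sigBody {α : Type} (lam k : ℕ) (b : List (Lit (BAt α))) : PF (XA α) :=
  (b.map (sigLit (sigBAt lam k))).foldr .and PF.top

def sigHead {α : Type} (k : ℕ) (h : List (Lit α)) : PF (XA α) :=
  (h.map (sigLit (fun a => PF.atom (XA.av a k)))).foldr .or .fls

/-- The translation `σ_k` of a plain metric rule. -/
def sigRule {α : Type} (lam k : ℕ) : PlainRule α → PF (XA α)
  | .basic h b => .imp (sigBody lam k b) (sigHead k h)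
  | .nxt _ a b => .imp (sigBody lam k b)
      (if k = lam - 1 then .fls else .atom (.av a (k + 1)))

/-- `Π_λ(P)`. -/
def PiTheory {α : Type} (lam : ℕ) (P : Set (PlainRule α)) : Set (PF (XA α)) :=
  {φ | ∃ r ∈ P, ∃ k, k < lam ∧ φ = sigRule lam k r}

/-- `Δ_{λ,ν}`. -/
def deltaTheory (α : Type) (lam ν : ℕ) : Set (PF (XA α)) :=
  insert (PF.atom (XA.tv 0 0))
    {φ | ∃ k d, k + 1 < lam ∧ d ≤ ν ∧
      φ = PF.imp (.atom (.tv k d))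
        (bigOr (((List.range (ν + 1)).filter (fun d' => decide (d < d'))).map
          (fun d' => PF.atom (XA.tv (k + 1) d'))))}

/-- `Ψ_{λ,ν}(P)`. -/
def psiTheory {α : Type} (lam ν : ℕ) (P : Set (PlainRule α)) : Set (PF (XA α)) :=
  {φ | ∃ I a b, PlainRule.nxt I a b ∈ P ∧ ∃ k d d', k + 1 < lam ∧ d < d' ∧ d' ≤ ν ∧
    (d' - d < I.m ∨ ∃ nn, I.n = some nn ∧ nn ≤ d' - d) ∧
    φ = PF.imp (.and (sigBody lam k b) (.and (.atom (.tv k d)) (.atom (.tv (k + 1) d')))) .fls}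

/-- The `a_k`-part of `θ(M)` for one component of the trace. -/
def thetaAv {α : Type} (lam : ℕ) (S : ℕ → Set α) : Set (XA α) :=
  {x | ∃ a k, k < lam ∧ a ∈ S k ∧ x = XA.av a k}

/-- The `t_{k,d}`-part `X` of `θ(M)`. -/
def thetaX (α : Type) (lam : ℕ) (τ : ℕ → ℕ) : Set (XA α) :=
  {x | ∃ k, k < lam ∧ x = XA.tv k (τ k)}

/-- One component of `θ(M)`: atoms from the trace component plus `X`. -/
def thetaHT {α : Type} (lam : ℕ) (τ : ℕ → ℕ) (S : ℕ → Set α) : Set (XA α) :=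
  thetaAv lam S ∪ thetaX α lam τ

/-- `⟨H,T⟩` is timed wrt `lam`, with induced timing function `τ`. -/
def TimedHT {α : Type} (lam : ℕ) (H T : Set (XA α)) (τ : ℕ → ℕ) : Prop :=
  IsTiming lam τ ∧
  ∀ k, k < lam → ∀ d, ((XA.tv k d ∈ H) ↔ τ k = d) ∧ ((XA.tv k d ∈ T) ↔ τ k = d)


section Aux
variable {α : Type} {β : Type}

lemma hsat_top {H T : Set β} : HSat H T PF.top := by
  simp [PF.top, PF.neg, HSat]

lemma msat_top {lam : ℕ} {τ : ℕ → ℕ} {H T : ℕ → Set α} {k : ℕ} :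
    MSat lam τ H T k MF.top := by
  simp [MF.top, MF.neg, MSat]

lemma full_mem (x : ℕ) : fullInterval.mem x := by
  constructor
  · exact Nat.zero_le x
  · intro nn h; simp [fullInterval] at h

lemma persistence {H T : Set β} (hsub : H ⊆ T) (φ : PF β) :
    HSat H T φ → HSat T T φ := by
  induction φ with
  | fls => exact id
  | atom a => exact fun h => hsub h
  | and φ ψ ihφ ihψ => exact fun h => ⟨ihφ h.1, ihψ h.2⟩
  | or φ ψ ihφ ihψ => exact fun h => h.elim (fun h => Or.inl (ihφ h)) (fun h => Or.inr (ihψ h))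
  | imp φ ψ _ _ => exact fun h => ⟨h.2, h.2⟩

lemma hsat_bigOr {γ : Type} {H T : Set β} (f : γ → PF β) (l : List γ) :
    HSat H T (bigOr (l.map f)) ↔ ∃ x ∈ l, HSat H T (f x) := by
  induction l with
  | nil => simp [bigOr, HSat]
  | cons a l ih =>
      simp only [bigOr, List.map_cons, List.foldr_cons] at ih ⊢
      simp only [HSat, ih, List.mem_cons]
      constructor
      · rintro (h | ⟨x, hx, h⟩)
        · exact ⟨a, Or.inl rfl, h⟩
        · exact ⟨x, Or.inr hx, h⟩
      · rintro ⟨x, (rfl | hx), h⟩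
        · exact Or.inl h
        · exact Or.inr ⟨x, hx, h⟩

lemma hsat_foldr_and {γ : Type} {H T : Set β} (f : γ → PF β) (l : List γ) :
    HSat H T ((l.map f).foldr .and PF.top) ↔ ∀ x ∈ l, HSat H T (f x) := by
  induction l with
  | nil => simp [HSat, hsat_top]
  | cons a l ih =>
      simp only [List.map_cons, List.foldr_cons]
      simp only [HSat, ih, List.mem_cons]
      constructor
      · rintro ⟨h1, h2⟩ x (rfl | hx)
        · exact h1
        · exact h2 x hx
      · intro h; exact ⟨h a (Or.inl rfl), fun x hx => h x (Or.inr hx)⟩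

lemma hsat_foldr_or {γ : Type} {H T : Set β} (f : γ → PF β) (l : List γ) :
    HSat H T ((l.map f).foldr .or .fls) ↔ ∃ x ∈ l, HSat H T (f x) := by
  have := hsat_bigOr (H := H) (T := T) f l
  simpa [bigOr] using this

lemma msat_foldr_conj {γ : Type} {lam : ℕ} {τ : ℕ → ℕ} {H T : ℕ → Set α} {k : ℕ}
    (f : γ → MF α) (l : List γ) :
    MSat lam τ H T k ((l.map f).foldr .conj MF.top) ↔ ∀ x ∈ l, MSat lam τ H T k (f x) := by
  induction l with
  | nil => simp [MSat, msat_top]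
  | cons a l ih =>
      simp only [List.map_cons, List.foldr_cons]
      simp only [MSat, ih, List.mem_cons]
      constructor
      · rintro ⟨h1, h2⟩ x (rfl | hx)
        · exact h1
        · exact h2 x hx
      · intro h; exact ⟨h a (Or.inl rfl), fun x hx => h x (Or.inr hx)⟩

lemma msat_foldr_disj {γ : Type} {lam : ℕ} {τ : ℕ → ℕ} {H T : ℕ → Set α} {k : ℕ}
    (f : γ → MF α) (l : List γ) :
    MSat lam τ H T k ((l.map f).foldr .disj .fls) ↔ ∃ x ∈ l, MSat lam τ H T k (f x) := by
  induction l with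
  | nil => simp [MSat]
  | cons a l ih =>
      simp only [List.map_cons, List.foldr_cons]
      simp only [MSat, ih, List.mem_cons]
      constructor
      · rintro (h | ⟨x, hx, h⟩)
        · exact ⟨a, Or.inl rfl, h⟩
        · exact ⟨x, Or.inr hx, h⟩
      · rintro ⟨x, (rfl | hx), h⟩
        · exact Or.inl h
        · exact Or.inr ⟨x, hx, h⟩

lemma lit_corr {lam k : ℕ} {τ : ℕ → ℕ} {H T : Set (XA α)} {Ht Tt : ℕ → Set α}
    (hk : k < lam)
    (hH : ∀ a, XA.av a k ∈ H ↔ a ∈ Ht k) (hT : ∀ a, XA.av a k ∈ T ↔ a ∈ Tt k)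
    (l : Lit (BAt α)) :
    HSat H T (sigLit (sigBAt lam k) l) ↔ MSat lam τ Ht Tt k (litMF BAt.mf l) := by
  cases l with
  | pos b =>
    cases b with
    | atm a => simp [sigLit, sigBAt, litMF, BAt.mf, HSat, MSat, hH a]
    | init =>
        by_cases h : k = 0 <;>
          simp [sigLit, sigBAt, litMF, BAt.mf, HSat, MSat, h, PF.top, PF.neg]
    | fin =>
        by_cases h : k = lam - 1 <;>
          simp [sigLit, sigBAt, litMF, BAt.mf, HSat, MSat, h, PF.top, PF.neg,
            MF.fin, MF.neg, MF.top, full_mem] <;> omega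
  | neg b =>
    cases b with
    | atm a => simp [sigLit, sigBAt, litMF, BAt.mf, HSat, MSat, PF.neg, MF.neg, hH a, hT a]
    | init =>
        by_cases h : k = 0 <;>
          simp [sigLit, sigBAt, litMF, BAt.mf, HSat, MSat, h, PF.top, PF.neg, MF.neg]
    | fin =>
        by_cases h : k = lam - 1 <;>
          simp [sigLit, sigBAt, litMF, BAt.mf, HSat, MSat, h, PF.top, PF.neg,
            MF.fin, MF.neg, MF.top, full_mem] <;> omega

lemma body_corr {lam k : ℕ} {τ : ℕ → ℕ} {H T : Set (XA α)} {Ht Tt : ℕ → Set α}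
    (hk : k < lam)
    (hH : ∀ a, XA.av a k ∈ H ↔ a ∈ Ht k) (hT : ∀ a, XA.av a k ∈ T ↔ a ∈ Tt k)
    (b : List (Lit (BAt α))) :
    HSat H T (sigBody lam k b) ↔ MSat lam τ Ht Tt k (bodyMF b) := by
  rw [show sigBody lam k b = (b.map (sigLit (sigBAt lam k))).foldr .and PF.top from rfl,
    show bodyMF b = (b.map (litMF BAt.mf)).foldr .conj MF.top from rfl]
  rw [hsat_foldr_and, msat_foldr_conj]
  exact forall₂_congr (fun l _ => lit_corr hk hH hT l)

lemma head_corr {lam k : ℕ} {τ : ℕ → ℕ} {H T : Set (XA α)} {Ht Tt : ℕ → Set α}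
    (hH : ∀ a, XA.av a k ∈ H ↔ a ∈ Ht k) (hT : ∀ a, XA.av a k ∈ T ↔ a ∈ Tt k)
    (h : List (Lit α)) :
    HSat H T (sigHead k h) ↔ MSat lam τ Ht Tt k (headMF h) := by
  rw [show sigHead k h = (h.map (sigLit (fun a => PF.atom (XA.av a k)))).foldr .or .fls from rfl,
    show headMF h = (h.map (litMF MF.atom)).foldr .disj .fls from rfl]
  rw [hsat_foldr_or, msat_foldr_disj]
  refine exists_congr (fun l => and_congr_right (fun _ => ?_))
  cases l with
  | pos a => simp [sigLit, litMF, HSat, MSat, hH a]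
  | neg a => simp [sigLit, litMF, HSat, MSat, PF.neg, MF.neg, hH a, hT a]

open Classical in
noncomputable def tauOf (T : Set (XA α)) (ν : ℕ) : ℕ → ℕ
  | 0 => 0
  | k+1 =>
      if h : ∃ d, tauOf T ν k < d ∧ d ≤ ν ∧ XA.tv (k+1) d ∈ T then h.choose
      else tauOf T ν k + 1

lemma tauOf_zero (T : Set (XA α)) (ν : ℕ) : tauOf T ν 0 = 0 := by simp [tauOf]

lemma tauOf_lt_succ (T : Set (XA α)) (ν k : ℕ) : tauOf T ν k < tauOf T ν (k+1) := by
  rw [tauOf]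
  split
  · next h => exact h.choose_spec.1
  · omega

lemma msat_always_full {lam : ℕ} {τ : ℕ → ℕ} {H T : ℕ → Set α} {φ : MF α}
    (h : MSat lam τ H T 0 (.always fullInterval φ)) :
    ∀ i, i < lam → MSat lam τ H T i φ :=
  fun i hi => h i (Nat.zero_le i) hi (full_mem _)

end Aux

theorem stmt1 {α : Type} (lam : ℕ) (hlam : 1 ≤ lam) (ν : ℕ)
    (T : Set (XA α)) (P : Set (PlainRule α))
    (hEq : EqModel T (PiTheory lam P ∪ deltaTheory α lam ν ∪ psiTheory lam ν P)) :
    ∃ τ : ℕ → ℕ, TimedHT lam T T τ ∧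
      MetricEqModel lam τ (fun k => {a | XA.av a k ∈ T}) (PlainRule.mf '' P) := by
  classical
  obtain ⟨hTot, hMin⟩ := hEq
  have hPiMem : ∀ (r : PlainRule α), r ∈ P → ∀ k, k < lam →
      sigRule lam k r ∈ PiTheory lam P ∪ deltaTheory α lam ν ∪ psiTheory lam ν P :=
    fun r hr k hk => Or.inl (Or.inl ⟨r, hr, k, hk, rfl⟩)
  set τ := tauOf T ν with hτ
  have hT00 : XA.tv 0 0 ∈ T := by
    have := hTot (PF.atom (XA.tv 0 0)) (Or.inl (Or.inr (Set.mem_insert _ _)))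
    exact this
  have chain : ∀ k, k < lam → XA.tv k (τ k) ∈ T ∧ τ k ≤ ν := by
    intro k
    induction k with
    | zero =>
        intro _
        have h0 : τ 0 = 0 := tauOf_zero T ν
        rw [h0]
        exact ⟨hT00, Nat.zero_le ν⟩
    | succ k ih =>
        intro hk1
        have hk : k < lam := by omega
        obtain ⟨hmem, hle⟩ := ih hk
        have hφ : PF.imp (.atom (.tv k (τ k)))
            (bigOr (((List.range (ν + 1)).filter (fun d' => decide (τ k < d'))).map
              (fun d' => PF.atom (XA.tv (k + 1) d')))) ∈
            PiTheory lam P ∪ deltaTheory α lam ν ∪ psiTheory lam ν P :=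
          Or.inl (Or.inr (Set.mem_insert_iff.mpr (Or.inr ⟨k, τ k, hk1, hle, rfl⟩)))
        have hs := hTot _ hφ
        have hb := hs.2 hmem
        rw [hsat_bigOr] at hb
        obtain ⟨d', hd'mem, hd'sat⟩ := hb
        simp only [List.mem_filter, List.mem_range, decide_eq_true_eq] at hd'mem
        have hex : ∃ d, tauOf T ν k < d ∧ d ≤ ν ∧ XA.tv (k+1) d ∈ T :=
          ⟨d', hd'mem.2, by omega, hd'sat⟩
        have heq : τ (k+1) = hex.choose := by
          rw [hτ]
          rw [tauOf]
          rw [dif_pos hex]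
        obtain ⟨h1, h2, h3⟩ := hex.choose_spec
        rw [heq]
        exact ⟨h3, h2⟩
  have hmono : ∀ k, τ k < τ (k+1) := fun k => tauOf_lt_succ T ν k
  have hTiming : IsTiming lam τ := ⟨tauOf_zero T ν, fun k _ => hmono k⟩
  -- uniqueness of timing atoms in T
  have huniq : ∀ k, k < lam → ∀ d, XA.tv k d ∈ T → d = τ k := by
    set H0 : Set (XA α) := {x | x ∈ T ∧ ∀ k d, x = XA.tv k d → k < lam → d = τ k} with hH0
    have hsub : H0 ⊆ T := fun x hx => hx.1
    have hav : ∀ (a : α) (k : ℕ), XA.av a k ∈ H0 ↔ XA.av a k ∈ T := by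
      intro a k
      exact ⟨fun h => h.1, fun h => ⟨h, by intro k' d' h'; exact absurd h' (by simp)⟩⟩
    have htv : ∀ k d, XA.tv k d ∈ H0 ↔ (XA.tv k d ∈ T ∧ (k < lam → d = τ k)) := by
      intro k d
      constructor
      · exact fun h => ⟨h.1, fun hk => h.2 k d rfl hk⟩
      · rintro ⟨h1, h2⟩
        refine ⟨h1, ?_⟩
        rintro k' d' h' hk'
        obtain ⟨rfl, rfl⟩ : k = k' ∧ d = d' := by simpa using h'
        exact h2 hk'
    have hmod : HTModels H0 T (PiTheory lam P ∪ deltaTheory α lam ν ∪ psiTheory lam ν P) := by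
      intro φ hφ
      rcases hφ with (hφ | hφ) | hφ
      · obtain ⟨r, hr, k, hk, rfl⟩ := hφ
        have htot := hTot _ (hPiMem r hr k hk)
        have hHa : ∀ a : α, XA.av a k ∈ H0 ↔ a ∈ {a : α | XA.av a k ∈ T} := fun a => hav a k
        have hTa : ∀ a : α, XA.av a k ∈ T ↔ a ∈ {a : α | XA.av a k ∈ T} := fun a => Iff.rfl
        cases r with
        | basic hd b =>
            refine ⟨fun hb => ?_, htot.2⟩
            have hbM := (body_corr (τ := τ) (Ht := fun k => {a : α | XA.av a k ∈ T}) (Tt := fun k => {a : α | XA.av a k ∈ T}) hk hHa hTa b).mp hb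
            have hbT := (body_corr (τ := τ) (Ht := fun k => {a : α | XA.av a k ∈ T}) (Tt := fun k => {a : α | XA.av a k ∈ T}) hk hTa hTa b).mpr hbM
            have hhT := htot.2 hbT
            exact (head_corr (lam := lam) (τ := τ) (Ht := fun k => {a : α | XA.av a k ∈ T}) (Tt := fun k => {a : α | XA.av a k ∈ T}) hHa hTa hd).mpr
              ((head_corr (lam := lam) (τ := τ) (Ht := fun k => {a : α | XA.av a k ∈ T}) (Tt := fun k => {a : α | XA.av a k ∈ T}) hTa hTa hd).mp hhT)
        | nxt I a b =>
            refine ⟨fun hb => ?_, htot.2⟩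
            have hbM := (body_corr (τ := τ) (Ht := fun k => {a : α | XA.av a k ∈ T}) (Tt := fun k => {a : α | XA.av a k ∈ T}) hk hHa hTa b).mp hb
            have hbT := (body_corr (τ := τ) (Ht := fun k => {a : α | XA.av a k ∈ T}) (Tt := fun k => {a : α | XA.av a k ∈ T}) hk hTa hTa b).mpr hbM
            have hhT := htot.2 hbT
            by_cases hkl : k = lam - 1
            · rw [if_pos hkl] at hhT ⊢
              exact hhT.elim
            · rw [if_neg hkl] at hhT ⊢
              exact (hav a (k+1)).mpr hhT
      · rcases Set.mem_insert_iff.mp hφ with rfl | ⟨k, d, hk1, hd, rfl⟩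
        · exact (htv 0 0).mpr ⟨hT00, fun _ => (tauOf_zero T ν).symm⟩
        · have htot := hTot _ (Or.inl (Or.inr (Set.mem_insert_iff.mpr (Or.inr ⟨k, d, hk1, hd, rfl⟩))))
          refine ⟨fun hb => ?_, htot.2⟩
          obtain ⟨hbT, himp⟩ := (htv k d).mp hb
          have hdk : d = τ k := himp (by omega)
          subst hdk
          refine (hsat_bigOr _ _).mpr ⟨τ (k+1), ?_,
            (htv (k+1) (τ (k+1))).mpr ⟨(chain (k+1) hk1).1, fun _ => rfl⟩⟩
          simp only [List.mem_filter, List.mem_range, decide_eq_true_eq]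
          have := (chain (k+1) hk1).2
          have := hmono k
          omega
      · have htot := hTot _ (Or.inr hφ)
        obtain ⟨I, a, b, -, k, d, d', -, -, -, -, rfl⟩ := hφ
        exact ⟨fun h => htot.2 (persistence hsub _ h), htot.2⟩
    have heqT : H0 = T := by
      by_contra hne
      exact hMin H0 (hsub.ssubset_of_ne hne) hmod
    intro k hk d hd
    have : XA.tv k d ∈ H0 := heqT ▸ hd
    exact this.2 k d rfl hk
  have hTimed : TimedHT lam T T τ := by
    refine ⟨hTiming, fun k hk d => ?_⟩
    have h1 : XA.tv k d ∈ T ↔ τ k = d :=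
      ⟨fun h => (huniq k hk d h).symm, fun h => h ▸ (chain k hk).1⟩
    exact ⟨h1, h1⟩
  -- the interval condition via Ψ
  have hIv : ∀ (i : ℕ), i + 1 < lam → ∀ (I : Interval) (a : α) (b : List (Lit (BAt α))),
      PlainRule.nxt I a b ∈ P → HSat T T (sigBody lam i b) → I.mem (τ (i+1) - τ i) := by
    intro i hi1 I a b hr hb
    by_contra hI
    have hcond : τ (i+1) - τ i < I.m ∨ ∃ nn, I.n = some nn ∧ nn ≤ τ (i+1) - τ i := by
      rcases Nat.lt_or_ge (τ (i+1) - τ i) I.m with h | h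
      · exact Or.inl h
      · right
        unfold Interval.mem at hI
        push_neg at hI
        obtain ⟨nn, hnn, hle⟩ := hI h
        exact ⟨nn, Option.mem_def.mp hnn, hle⟩
    have hψmem : (PF.imp (.and (sigBody lam i b)
          (.and (.atom (.tv i (τ i))) (.atom (.tv (i+1) (τ (i+1)))))) .fls)
        ∈ psiTheory lam ν P :=
      ⟨I, a, b, hr, i, τ i, τ (i+1), hi1, hmono i, (chain (i+1) hi1).2, hcond, rfl⟩
    have htot := hTot _ (Or.inr hψmem)
    exact htot.2 ⟨hb, (chain i (by omega)).1, (chain (i+1) hi1).1⟩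
  have hTa : ∀ (k : ℕ) (a : α), XA.av a k ∈ T ↔ a ∈ {a : α | XA.av a k ∈ T} := fun _ _ => Iff.rfl
  -- total MHT model
  have hTotM : MHTModels lam τ (fun k => {a | XA.av a k ∈ T}) (fun k => {a | XA.av a k ∈ T})
      (PlainRule.mf '' P) := by
    rintro φ ⟨r, hr, rfl⟩
    cases r with
    | basic hd b =>
        intro i _ hi _
        have hkey : MSat lam τ (fun k => {a : α | XA.av a k ∈ T}) (fun k => {a : α | XA.av a k ∈ T}) i (bodyMF b) →
            MSat lam τ (fun k => {a : α | XA.av a k ∈ T}) (fun k => {a : α | XA.av a k ∈ T}) i (headMF hd) := by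
          intro hb
          have hbσ := (body_corr (τ := τ) (Ht := fun k => {a : α | XA.av a k ∈ T}) (Tt := fun k => {a : α | XA.av a k ∈ T}) hi (hTa i) (hTa i) b).mpr hb
          have hh := (hTot _ (hPiMem _ hr i hi)).2 hbσ
          exact (head_corr (lam := lam) (τ := τ) (Ht := fun k => {a : α | XA.av a k ∈ T}) (Tt := fun k => {a : α | XA.av a k ∈ T}) (hTa i) (hTa i) hd).mp hh
        exact ⟨hkey, hkey⟩
    | nxt I a b =>
        intro i _ hi _
        have hkey : MSat lam τ (fun k => {a : α | XA.av a k ∈ T}) (fun k => {a : α | XA.av a k ∈ T}) i (bodyMF b) →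
            MSat lam τ (fun k => {a : α | XA.av a k ∈ T}) (fun k => {a : α | XA.av a k ∈ T}) i (.next I (.atom a)) := by
          intro hb
          have hbσ := (body_corr (τ := τ) (Ht := fun k => {a : α | XA.av a k ∈ T}) (Tt := fun k => {a : α | XA.av a k ∈ T}) hi (hTa i) (hTa i) b).mpr hb
          have hh := (hTot _ (hPiMem _ hr i hi)).2 hbσ
          by_cases hil : i = lam - 1
          · rw [if_pos hil] at hh
            exact hh.elim
          · rw [if_neg hil] at hh
            have hi1 : i + 1 < lam := by omega
            exact ⟨hi1, hh, hIv i hi1 I a b hr hbσ⟩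
        exact ⟨hkey, hkey⟩
  refine ⟨τ, hTimed, hTotM, ?_⟩
  -- minimality
  intro Ht htrace hdiff hM
  obtain ⟨i0, hi0, hne0⟩ := hdiff
  have hnsub : ¬ {a : α | XA.av a i0 ∈ T} ⊆ Ht i0 :=
    fun hs => hne0 (subset_antisymm (htrace i0 hi0) hs)
  obtain ⟨a0, ha0T, ha0H⟩ := Set.not_subset.mp hnsub
  set H : Set (XA α) := {x | x ∈ T ∧ ∀ a k, x = XA.av a k → k < lam → a ∈ Ht k} with hHdef
  have hsubH : H ⊆ T := fun x hx => hx.1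
  have hHav : ∀ (a : α) (k : ℕ), k < lam → (XA.av a k ∈ H ↔ a ∈ Ht k) := by
    intro a k hk
    constructor
    · exact fun h => h.2 a k rfl hk
    · intro h
      refine ⟨htrace k hk h, ?_⟩
      rintro a' k' h' hk'
      obtain ⟨rfl, rfl⟩ : a = a' ∧ k = k' := by simpa using h'
      exact h
  have hHtv : ∀ k d, XA.tv k d ∈ H ↔ XA.tv k d ∈ T := by
    intro k d
    exact ⟨fun h => h.1, fun h => ⟨h, by intro a' k' h'; exact absurd h' (by simp)⟩⟩
  have hssub : H ⊂ T := by
    refine hsubH.ssubset_of_ne (fun he => ?_)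
    have hmem : XA.av a0 i0 ∈ H := he ▸ ha0T
    exact ha0H ((hHav a0 i0 hi0).mp hmem)
  refine hMin H hssub fun φ hφ => ?_
  rcases hφ with (hφ | hφ) | hφ
  · obtain ⟨r, hr, k, hk, rfl⟩ := hφ
    have htot := hTot _ (hPiMem r hr k hk)
    have hMr := hM _ ⟨r, hr, rfl⟩
    cases r with
    | basic hd b =>
        refine ⟨fun hb => ?_, htot.2⟩
        have hbM := (body_corr (τ := τ) (Ht := Ht) (Tt := fun k => {a : α | XA.av a k ∈ T}) hk (fun a => hHav a k hk) (hTa k) b).mp hb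
        have hhM := (msat_always_full hMr k hk).1 hbM
        exact (head_corr (lam := lam) (τ := τ) (Ht := Ht) (Tt := fun k => {a : α | XA.av a k ∈ T}) (fun a => hHav a k hk) (hTa k) hd).mpr hhM
    | nxt I a b =>
        refine ⟨fun hb => ?_, htot.2⟩
        have hbM := (body_corr (τ := τ) (Ht := Ht) (Tt := fun k => {a : α | XA.av a k ∈ T}) hk (fun a => hHav a k hk) (hTa k) b).mp hb
        obtain ⟨hk1, haH, -⟩ := (msat_always_full hMr k hk).1 hbM
        have hkl : k ≠ lam - 1 := by omega
        rw [if_neg hkl]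
        exact (hHav a (k+1) hk1).mpr haH
  · rcases Set.mem_insert_iff.mp hφ with rfl | ⟨k, d, hk1, hd, rfl⟩
    · exact (hHtv 0 0).mpr hT00
    · have htot := hTot _ (Or.inl (Or.inr (Set.mem_insert_iff.mpr (Or.inr ⟨k, d, hk1, hd, rfl⟩))))
      refine ⟨fun hb => ?_, htot.2⟩
      have hbT : XA.tv k d ∈ T := (hHtv k d).mp hb
      have hbig := htot.2 hbT
      rw [hsat_bigOr] at hbig ⊢
      obtain ⟨d', hmem, hsat⟩ := hbig
      exact ⟨d', hmem, (hHtv (k+1) d').mpr hsat⟩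
  · have htot := hTot _ (Or.inr hφ)
    obtain ⟨I, a, b, -, k, d, d', -, -, -, -, rfl⟩ := hφ
    exact ⟨fun h => htot.2 (persistence hsubH _ h), htot.2⟩


end MetricASP
end

section
/- Let λ ≥ 1 and let ⟨H,T⟩ be an HT-interpretation over an alphabet containing 𝒯. If ⟨H,T⟩ is timed wrt λ with induced timing function τ, then ⟨H,T⟩ is an HT-model of Δ_{λ,ν} for ν = τ(λ−1). -/
namespace MetricASP

/-- `Δ_{λ,ν}` over an alphabet `β` containing the atoms `t_{k,d}` given by `tv`. -/
def deltaG {β : Type} (tv : ℕ → ℕ → β) (lam ν : ℕ) : Set (PF β) :=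
  insert (PF.atom (tv 0 0))
    {φ | ∃ k d, k + 1 < lam ∧ d ≤ ν ∧
      φ = PF.imp (.atom (tv k d))
        (bigOr (((List.range (ν + 1)).filter (fun d' => decide (d < d'))).map
          (fun d' => PF.atom (tv (k + 1) d'))))}

theorem HSat_bigOr_of_mem {β : Type} {H T : Set β} {l : List (PF β)} {φ : PF β}
    (hφ : φ ∈ l) (h : HSat H T φ) : HSat H T (bigOr l) := by
  induction l with
  | nil => exact absurd hφ List.not_mem_nil
  | cons ψ l ih =>
    rcases List.mem_cons.mp hφ with rfl | hφl
    · exact Or.inl h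
    · exact Or.inr (ih hφl)

theorem IsTiming.strictMonoOn {lam : ℕ} {τ : ℕ → ℕ} (hτ : IsTiming lam τ) :
    StrictMonoOn τ (Set.Iio lam) :=
  strictMonoOn_of_lt_add_one Set.ordConnected_Iio fun k _ _ hk => hτ.2 k hk

/-- The head is witnessed by `t_{k+1,τ(k+1)}`, since `d = τ k < τ (k+1) ≤ τ (lam-1)`. -/
theorem HSat_deltaG_head {β : Type} {tv : ℕ → ℕ → β} {lam : ℕ} {τ : ℕ → ℕ}
    (hτ : IsTiming lam τ) {S Y : Set β} (hS : ∀ k, k < lam → ∀ d, tv k d ∈ S ↔ τ k = d)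
    {k d : ℕ} (hk : k + 1 < lam) (hkd : tv k d ∈ S) :
    HSat S Y (bigOr (((List.range (τ (lam - 1) + 1)).filter (fun d' => decide (d < d'))).map
      (fun d' => PF.atom (tv (k + 1) d')))) := by
  have hd : τ k = d := (hS k (by omega) d).mp hkd
  have hlast : τ (k + 1) ≤ τ (lam - 1) :=
    hτ.strictMonoOn.monotoneOn (Set.mem_Iio.mpr hk) (Set.mem_Iio.mpr (by omega)) (by omega)
  refine HSat_bigOr_of_mem (φ := PF.atom (tv (k + 1) (τ (k + 1)))) ?_
    ((hS (k + 1) hk _).mpr rfl)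
  simp only [List.mem_map, List.mem_filter, List.mem_range, decide_eq_true_eq]
  exact ⟨τ (k + 1), ⟨by omega, hd ▸ hτ.2 k hk⟩, rfl⟩

theorem stmt10_general {β : Type} (tv : ℕ → ℕ → β)
    (lam : ℕ) (hlam : 1 ≤ lam) (H T : Set β)
    (τ : ℕ → ℕ) (hτ : IsTiming lam τ)
    (hTimed : ∀ k, k < lam → ∀ d, ((tv k d ∈ H) ↔ τ k = d) ∧ ((tv k d ∈ T) ↔ τ k = d)) :
    HTModels H T (deltaG tv lam (τ (lam - 1))) := by
  rintro φ (rfl | ⟨k, d, hk, -, rfl⟩)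
  · exact (hTimed 0 hlam 0).1.mpr hτ.1
  · exact ⟨HSat_deltaG_head hτ (fun k hk d => (hTimed k hk d).1) hk,
      HSat_deltaG_head hτ (fun k hk d => (hTimed k hk d).2) hk⟩

theorem stmt10 {β : Type} (tv : ℕ → ℕ → β)
    (htv : ∀ k d k' d', tv k d = tv k' d' → k = k' ∧ d = d')
    (lam : ℕ) (hlam : 1 ≤ lam) (H T : Set β) (hHT : H ⊆ T)
    (τ : ℕ → ℕ) (hτ : IsTiming lam τ)
    (hTimed : ∀ k, k < lam → ∀ d, ((tv k d ∈ H) ↔ τ k = d) ∧ ((tv k d ∈ T) ↔ τ k = d)) :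
    HTModels H T (deltaG tv lam (τ (lam - 1))) :=
  stmt10_general tv lam hlam H T τ hτ hTimed

end MetricASP
end
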